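/- arXiv:1409.8134 — 5 statements merged into one kernel-verified Lean document; each statement's English description precedes it below -/
import Mathlib

section
/- Let σ₊ ∈ ℝ and θ ∈ ℝ with 2 sin²θ ≥ 1, let φ̃ satisfy sin φ̃ = sgn(sin θ)√(2 sin²θ − 1), cos φ̃ = √2 cos θ, and set z = e^{iθ} and f = e^{i(θ + σ₊ + φ̃)}. Then f² − √2 e^{iσ₊}(1 + z²) f + e^{2iσ₊} z² = 0. -/
/-! With `b = e^{iσ₊}` and `c = e^{iφ̃}` we have `f = zbc`, and the left-hand side
factors as `z²b² (c² - √2 (z + z⁻¹) c + 1)`. Since `z + z⁻¹ = 2 cos θ` and `√2 cos θ = cos φ̃`,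
the bracket is `c² - 2 cos φ̃ · c + 1`, which vanishes because `c + c⁻¹ = 2 cos φ̃`. -/

open Real Complex

theorem Complex.exp_mul_I_sq_add_one (x : ℂ) :
    exp (x * I) ^ 2 + 1 = 2 * cos x * exp (x * I) := by
  have hinv : exp (-x * I) * exp (x * I) = 1 := by
    rw [← Complex.exp_add, neg_mul, neg_add_cancel, exp_zero]
  rw [two_cos, add_mul, hinv]
  ring

theorem f_satisfies_quadratic_general (σp θ φ : ℝ)
    (hcos : Real.cos φ = Real.sqrt 2 * Real.cos θ) :
    let z : ℂ := Complex.exp (θ * Complex.I)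
    let f : ℂ := Complex.exp ((θ + σp + φ) * Complex.I)
    f ^ 2 - Real.sqrt 2 * Complex.exp (σp * Complex.I) * (1 + z ^ 2) * f +
      Complex.exp (2 * σp * Complex.I) * z ^ 2 = 0 := by
  intro z f
  set b := Complex.exp (σp * I)
  set c := Complex.exp (φ * I)
  have hf : f = z * b * c := by simp only [f, z, b, c, ← Complex.exp_add]; ring_nf
  have hb : Complex.exp (2 * σp * I) = b ^ 2 := by rw [← Complex.exp_nat_mul]; ring_nf
  have hz : 1 + z ^ 2 = 2 * (Real.cos θ : ℂ) * z := by
    rw [add_comm, ofReal_cos]; exact Complex.exp_mul_I_sq_add_one θ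
  have hc : c ^ 2 + 1 = 2 * (Real.cos φ : ℂ) * c := by
    rw [ofReal_cos]; exact Complex.exp_mul_I_sq_add_one φ
  have hcosC : (Real.cos φ : ℂ) = Real.sqrt 2 * Real.cos θ := by exact_mod_cast hcos
  rw [hf, hb, hz]
  linear_combination z ^ 2 * b ^ 2 * hc + 2 * z ^ 2 * b ^ 2 * c * hcosC

theorem f_satisfies_quadratic (σp θ φ : ℝ) (h2 : 1 ≤ 2 * Real.sin θ ^ 2)
    (hsin : Real.sin φ = Real.sign (Real.sin θ) * Real.sqrt (2 * Real.sin θ ^ 2 - 1))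
    (hcos : Real.cos φ = Real.sqrt 2 * Real.cos θ) :
    let z : ℂ := Complex.exp (θ * Complex.I)
    let f : ℂ := Complex.exp ((θ + σp + φ) * Complex.I)
    f ^ 2 - Real.sqrt 2 * Complex.exp (σp * Complex.I) * (1 + z ^ 2) * f +
      Complex.exp (2 * σp * Complex.I) * z ^ 2 = 0 :=
  f_satisfies_quadratic_general σp θ φ hcos
end

section
/- Let σ, θ ∈ ℝ and φ̃ ∈ ℝ. If e^{i(θ + φ̃)} = i e^{−iσ}, sin φ̃ = sgn(sin θ)√(2 sin²θ − 1) and cos φ̃ = √2 cos θ, then sin²θ = (√2 − sin σ)²/(3 − 2√2 sin σ) and cos²θ = cos²σ/(3 − 2√2 sin σ). -/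
/-!
Reading off real and imaginary parts, the hypothesis on the exponentials says
`cos (θ + φ) = sin σ` and `sin (θ + φ) = cos σ`. With `w = √2 sin θ + sin φ`, the relation
`cos φ = √2 cos θ` turns these into `√2 - sin σ = w sin θ`, `cos σ = w cos θ` and
`3 - 2√2 sin σ = w²`, so both identities follow once `w ≠ 0`; and `w = 0` is impossible because
`sin² φ = 2 sin² θ - 1` differs from `(√2 sin θ)²`.
-/

open Real Complex

theorem cos_eq_sin_and_sin_eq_cos_of_exp_mul_I_eq (x σ : ℝ)
    (h : Complex.exp (x * I) = I * Complex.exp (-σ * I)) :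
    Real.cos x = Real.sin σ ∧ Real.sin x = Real.cos σ := by
  have hre := congrArg Complex.re h
  have him := congrArg Complex.im h
  simp only [← ofReal_neg, Complex.exp_ofReal_mul_I_re, Complex.exp_ofReal_mul_I_im, Complex.mul_re,
    Complex.mul_im, I_re, I_im] at hre him
  simp only [Real.cos_neg, Real.sin_neg] at hre him
  constructor <;> linarith

theorem sin_sq_eq_of_cos_eq_sqrt_two_mul_cos {θ φ : ℝ} (h : Real.cos φ = √2 * Real.cos θ) :
    Real.sin φ ^ 2 = 2 * Real.sin θ ^ 2 - 1 := by
  have h2 : √2 ^ 2 = 2 := Real.sq_sqrt zero_le_two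
  linear_combination Real.sin_sq_add_cos_sq φ - (Real.cos φ + √2 * Real.cos θ) * h
    - Real.cos θ ^ 2 * h2 - 2 * Real.sin_sq_add_cos_sq θ

theorem sqrt_two_mul_sin_add_sin_ne_zero {θ φ : ℝ} (h : Real.cos φ = √2 * Real.cos θ) :
    √2 * Real.sin θ + Real.sin φ ≠ 0 := by
  intro hw
  have h2 : √2 ^ 2 = 2 := Real.sq_sqrt zero_le_two
  have hsq := sin_sq_eq_of_cos_eq_sqrt_two_mul_cos h
  rw [eq_neg_of_add_eq_zero_right hw] at hsq
  nlinarith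

theorem sqrt_two_sub_cos_add_of_cos_eq {θ φ : ℝ} (h : Real.cos φ = √2 * Real.cos θ) :
    √2 - Real.cos (θ + φ) = Real.sin θ * (√2 * Real.sin θ + Real.sin φ) := by
  rw [Real.cos_add, h]
  linear_combination -√2 * Real.sin_sq_add_cos_sq θ

theorem sin_add_of_cos_eq {θ φ : ℝ} (h : Real.cos φ = √2 * Real.cos θ) :
    Real.sin (θ + φ) = Real.cos θ * (√2 * Real.sin θ + Real.sin φ) := by
  rw [Real.sin_add, h]
  ring

theorem three_sub_two_sqrt_two_mul_cos_add_of_cos_eq {θ φ : ℝ}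
    (h : Real.cos φ = √2 * Real.cos θ) :
    3 - 2 * √2 * Real.cos (θ + φ) = (√2 * Real.sin θ + Real.sin φ) ^ 2 := by
  have h2 : √2 ^ 2 = 2 := Real.sq_sqrt zero_le_two
  rw [Real.cos_add, h]
  linear_combination (-sin_sq_eq_of_cos_eq_sqrt_two_mul_cos h) - 4 * Real.sin_sq_add_cos_sq θ
    - (2 * Real.cos θ ^ 2 + Real.sin θ ^ 2) * h2

theorem singular_point_family_one_general (σ θ φ : ℝ)
    (heq : Complex.exp ((θ + φ) * Complex.I) = Complex.I * Complex.exp (-σ * Complex.I))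
    (hcos : Real.cos φ = Real.sqrt 2 * Real.cos θ) :
    Real.sin θ ^ 2 = (Real.sqrt 2 - Real.sin σ) ^ 2 / (3 - 2 * Real.sqrt 2 * Real.sin σ) ∧
    Real.cos θ ^ 2 = Real.cos σ ^ 2 / (3 - 2 * Real.sqrt 2 * Real.sin σ) := by
  obtain ⟨hcos_add, hsin_add⟩ :=
    cos_eq_sin_and_sin_eq_cos_of_exp_mul_I_eq (θ + φ) σ (by exact_mod_cast heq)
  have hw := pow_ne_zero 2 (sqrt_two_mul_sin_add_sin_ne_zero hcos)
  rw [← hcos_add, ← hsin_add, three_sub_two_sqrt_two_mul_cos_add_of_cos_eq hcos,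
    sqrt_two_sub_cos_add_of_cos_eq hcos, sin_add_of_cos_eq hcos, mul_pow, mul_pow,
    mul_div_cancel_right₀ _ hw, mul_div_cancel_right₀ _ hw]
  exact ⟨rfl, rfl⟩

theorem singular_point_family_one (σ θ φ : ℝ)
    (heq : Complex.exp ((θ + φ) * Complex.I) = Complex.I * Complex.exp (-σ * Complex.I))
    (hsin : Real.sin φ = Real.sign (Real.sin θ) * Real.sqrt (2 * Real.sin θ ^ 2 - 1))
    (hcos : Real.cos φ = Real.sqrt 2 * Real.cos θ) :
    Real.sin θ ^ 2 = (Real.sqrt 2 - Real.sin σ) ^ 2 / (3 - 2 * Real.sqrt 2 * Real.sin σ) ∧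
    Real.cos θ ^ 2 = Real.cos σ ^ 2 / (3 - 2 * Real.sqrt 2 * Real.sin σ) :=
  singular_point_family_one_general σ θ φ heq hcos
end

section
/- Let σ, θ ∈ ℝ and φ̃ ∈ ℝ. If e^{i(θ + φ̃)} = −i e^{−iσ}, sin φ̃ = sgn(sin θ)√(2 sin²θ − 1) and cos φ̃ = √2 cos θ, then sin²θ = (√2 + sin σ)²/(3 + 2√2 sin σ) and cos²θ = cos²σ/(3 + 2√2 sin σ). -/
/-!
Put `w = √2 sin θ + sin φ`. Comparing real and imaginary parts of
`e^{i(θ+φ)} = -i e^{-iσ}` and substituting `cos φ = √2 cos θ` gives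
`√2 + sin σ = w sin θ` and `cos σ = -w cos θ`, while `sin² φ = 1 - 2 cos² θ` turns `w²` into
`3 + 2√2 sin σ`. Since `sin σ ≥ -1 > -√2`, `w ≠ 0`, and both identities follow by dividing by `w²`.
-/

open Real Complex

lemma cos_eq_neg_sin_and_sin_eq_neg_cos_of_exp_mul_I_eq {α σ : ℝ}
    (h : Complex.exp (α * I) = -I * Complex.exp (-σ * I)) :
    Real.cos α = -Real.sin σ ∧ Real.sin α = -Real.cos σ := by
  rw [← ofReal_neg] at h
  constructor
  · simpa [exp_ofReal_mul_I_re, exp_ofReal_mul_I_im, -ofReal_neg] using congrArg re h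
  · simpa [exp_ofReal_mul_I_re, exp_ofReal_mul_I_im, -ofReal_neg] using congrArg im h

section

variable {θ φ σ : ℝ}

lemma sqrt_two_add_sin_eq_sin_mul (hcos : Real.cos φ = √2 * Real.cos θ)
    (h : Real.cos (θ + φ) = -Real.sin σ) :
    √2 + Real.sin σ = Real.sin θ * (√2 * Real.sin θ + Real.sin φ) := by
  rw [Real.cos_add, hcos] at h
  linear_combination h - √2 * Real.sin_sq_add_cos_sq θ

lemma cos_eq_neg_cos_mul (hcos : Real.cos φ = √2 * Real.cos θ)
    (h : Real.sin (θ + φ) = -Real.cos σ) :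
    Real.cos σ = -(Real.cos θ * (√2 * Real.sin θ + Real.sin φ)) := by
  rw [Real.sin_add, hcos] at h
  linear_combination h

lemma sq_sqrt_two_mul_sin_add_sin_eq (hcos : Real.cos φ = √2 * Real.cos θ)
    (h : Real.cos (θ + φ) = -Real.sin σ) :
    (√2 * Real.sin θ + Real.sin φ) ^ 2 = 3 + 2 * √2 * Real.sin σ := by
  have hφ := Real.sin_sq_add_cos_sq φ
  rw [Real.cos_add, hcos] at h
  rw [hcos] at hφ
  linear_combination (-2 * √2) * h + hφ + √2 ^ 2 * Real.sin_sq_add_cos_sq θ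
    + Real.sq_sqrt zero_le_two

end

theorem singular_point_family_two_general (σ θ φ : ℝ)
    (heq : Complex.exp ((θ + φ) * Complex.I) = -Complex.I * Complex.exp (-σ * Complex.I))
    (hcos : Real.cos φ = Real.sqrt 2 * Real.cos θ) :
    Real.sin θ ^ 2 = (Real.sqrt 2 + Real.sin σ) ^ 2 / (3 + 2 * Real.sqrt 2 * Real.sin σ) ∧
    Real.cos θ ^ 2 = Real.cos σ ^ 2 / (3 + 2 * Real.sqrt 2 * Real.sin σ) := by
  obtain ⟨hc, hs⟩ := cos_eq_neg_sin_and_sin_eq_neg_cos_of_exp_mul_I_eq (α := θ + φ)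
    (by push_cast; exact heq)
  have hsinσ := sqrt_two_add_sin_eq_sin_mul hcos hc
  have hw0 : √2 * Real.sin θ + Real.sin φ ≠ 0 := by
    intro hw
    rw [hw, mul_zero] at hsinσ
    linarith [Real.neg_one_le_sin σ, Real.one_lt_sqrt_two]
  rw [← sq_sqrt_two_mul_sin_add_sin_eq hcos hc, hsinσ, cos_eq_neg_cos_mul hcos hs]
  have hw2 := pow_ne_zero 2 hw0
  constructor
  · rw [mul_pow, mul_div_cancel_right₀ _ hw2]
  · rw [neg_sq, mul_pow, mul_div_cancel_right₀ _ hw2]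

theorem singular_point_family_two (σ θ φ : ℝ)
    (heq : Complex.exp ((θ + φ) * Complex.I) = -Complex.I * Complex.exp (-σ * Complex.I))
    (hsin : Real.sin φ = Real.sign (Real.sin θ) * Real.sqrt (2 * Real.sin θ ^ 2 - 1))
    (hcos : Real.cos φ = Real.sqrt 2 * Real.cos θ) :
    Real.sin θ ^ 2 = (Real.sqrt 2 + Real.sin σ) ^ 2 / (3 + 2 * Real.sqrt 2 * Real.sin σ) ∧
    Real.cos θ ^ 2 = Real.cos σ ^ 2 / (3 + 2 * Real.sqrt 2 * Real.sin σ) :=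
  singular_point_family_two_general σ θ φ heq hcos
end

section
/- Let s ∈ (−1/√2, 1] and let θ ∈ ℝ satisfy sin²θ = (√2 + s)²/(3 + 2√2 s). Then 1 + √2|sin θ|/√(2 sin²θ − 1) = (3 + 2√2 s)/(1 + √2 s), and hence 1/(4(1 + √2|sin θ|/√(2 sin²θ − 1))²) = (1 + √2 s)²/(4(3 + 2√2 s)²). -/
/-!
Write `q = 3 + 2√2 s`. Since `(√2)² = 2`, one has `2 (√2 + s)² - q = (1 + √2 s)²`, so
`sin²θ / (2 sin²θ - 1) = ((√2 + s) / (1 + √2 s))²`. For `s > -1/√2` both `√2 + s` and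
`1 + √2 s` are positive, hence `|sin θ| / √(2 sin²θ - 1) = (√2 + s) / (1 + √2 s)`, and
`1 + √2 (√2 + s) / (1 + √2 s) = q / (1 + √2 s)`.
-/

open Real

lemma one_add_sqrt_two_mul_pos {s : ℝ} (hs : -1 / √2 < s) : 0 < 1 + √2 * s := by
  have h := mul_lt_mul_of_pos_left hs (sqrt_pos.mpr two_pos)
  rwa [mul_div_cancel₀ _ (sqrt_pos.mpr two_pos).ne', ← sub_pos, sub_neg_eq_add, add_comm] at h

lemma div_two_mul_sub_one_eq_sq {K : Type*} [Field K] {r s t : K} (hr : r ^ 2 = 2)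
    (hq : 3 + 2 * r * s ≠ 0) (ht : t = (r + s) ^ 2 / (3 + 2 * r * s)) :
    t / (2 * t - 1) = ((r + s) / (1 + r * s)) ^ 2 := by
  have hden : 2 * t - 1 = (1 + r * s) ^ 2 / (3 + 2 * r * s) := by
    rw [ht]
    field_simp
    linear_combination (2 - s ^ 2) * hr
  rw [hden, ht, div_pow, div_div_div_cancel_right₀ hq]

lemma abs_sin_div_sqrt_eq {s θ : ℝ} (hs : -1 / √2 < s)
    (hθ : sin θ ^ 2 = (√2 + s) ^ 2 / (3 + 2 * √2 * s)) :
    |sin θ| / √(2 * sin θ ^ 2 - 1) = (√2 + s) / (1 + √2 * s) := by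
  have hp := one_add_sqrt_two_mul_pos hs
  have hr : √2 ^ 2 = 2 := sq_sqrt zero_le_two
  have hnum : 0 < √2 + s := by nlinarith [sqrt_nonneg 2]
  rw [← sqrt_sq_eq_abs, ← sqrt_div (sq_nonneg _),
    div_two_mul_sub_one_eq_sq hr (by linarith) hθ, sqrt_sq (by positivity)]

theorem residue_family_two_general (s θ : ℝ) (hs1 : -1 / Real.sqrt 2 < s)
    (hθ : Real.sin θ ^ 2 = (Real.sqrt 2 + s) ^ 2 / (3 + 2 * Real.sqrt 2 * s)) :
    1 + Real.sqrt 2 * |Real.sin θ| / Real.sqrt (2 * Real.sin θ ^ 2 - 1)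
      = (3 + 2 * Real.sqrt 2 * s) / (1 + Real.sqrt 2 * s) ∧
    1 / (4 * (1 + Real.sqrt 2 * |Real.sin θ| / Real.sqrt (2 * Real.sin θ ^ 2 - 1)) ^ 2)
      = (1 + Real.sqrt 2 * s) ^ 2 / (4 * (3 + 2 * Real.sqrt 2 * s) ^ 2) := by
  have hp := one_add_sqrt_two_mul_pos hs1
  have hq : 0 < 3 + 2 * √2 * s := by linarith
  have hmain :
      1 + √2 * |sin θ| / √(2 * sin θ ^ 2 - 1) = (3 + 2 * √2 * s) / (1 + √2 * s) := by
    rw [mul_div_assoc, abs_sin_div_sqrt_eq hs1 hθ]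
    field_simp
    linear_combination sq_sqrt (zero_le_two : (0 : ℝ) ≤ 2)
  refine ⟨hmain, ?_⟩
  rw [hmain]
  field_simp

theorem residue_family_two (s θ : ℝ) (hs1 : -1 / Real.sqrt 2 < s) (hs2 : s ≤ 1)
    (hθ : Real.sin θ ^ 2 = (Real.sqrt 2 + s) ^ 2 / (3 + 2 * Real.sqrt 2 * s)) :
    1 + Real.sqrt 2 * |Real.sin θ| / Real.sqrt (2 * Real.sin θ ^ 2 - 1)
      = (3 + 2 * Real.sqrt 2 * s) / (1 + Real.sqrt 2 * s) ∧
    1 / (4 * (1 + Real.sqrt 2 * |Real.sin θ| / Real.sqrt (2 * Real.sin θ ^ 2 - 1)) ^ 2)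
      = (1 + Real.sqrt 2 * s) ^ 2 / (4 * (3 + 2 * Real.sqrt 2 * s) ^ 2) :=
  residue_family_two_general s θ hs1 hθ
end

section
/- Let σ₊, σ₋ ∈ ℝ, σ = (σ₊−σ₋)/2, c ∈ ℂ, α = c/√2, β = −i e^{−i(σ₊+σ₋)/2} c/√2, λ = (cos σ + i(sin σ + √2))/√(3 + 2√2 sin σ), and θ_s = −i/√(3 + 2√2 sin σ), where sin σ > −1/√2 and c ≠ 0. Then the four expressions −(√2 λ²α + e^{iσ₊}β)/(λα), β/(λ(e^{−iσ₊}α + √2β)), α/(λ(√2α − e^{iσ₋}β)), and (e^{−iσ₋}α − √2λ²β)/(λβ) are all equal to θ_s. -/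
/-!
Write `z = e^{iσ}` and `w = z + √2 i`. Then `|w|² = 3 + 2√2 sin σ`, so `λ = w / |w|` and
`θ_s = -i / |w|`; and `w ≠ 0` because `|z| = 1 < √2`, so no denominator vanishes.
Since `β = -i e^{-iμ} α` with `μ = (σ₊ + σ₋)/2`, every phase `e^{±iσ±}` meets `e^{-iμ}` and leaves
`z` or `z̄`, after which `α` and `β` cancel. The second and third ratios then follow from
`λ w̄ = |w|`, and the first and fourth from `√2 w - i z w̄ = i` (a consequence of `z z̄ = 1`),
which after multiplying by `w / |w|²` reads `√2 λ² - i z = i λ / |w|`.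
-/

open Real Complex ComplexConjugate

namespace Complex

theorem div_norm_mul_conj (w : ℂ) : w / ‖w‖ * conj w = ‖w‖ := by
  rcases eq_or_ne w 0 with rfl | hw
  · simp
  · rw [div_mul_eq_mul_div, mul_conj', div_eq_iff (ofReal_ne_zero.mpr (norm_ne_zero_iff.mpr hw))]
    ring

theorem norm_add_ofReal_mul_I_sq (z : ℂ) (r : ℝ) :
    ‖z + r * I‖ ^ 2 = ‖z‖ ^ 2 + r ^ 2 + 2 * r * z.im := by
  simp only [Complex.sq_norm, normSq_apply, add_re, add_im, re_ofReal_mul, im_ofReal_mul, I_re,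
    I_im]
  ring

theorem add_ofReal_mul_I_ne_zero {z : ℂ} {r : ℝ} (h : ‖z‖ < r) : z + r * I ≠ 0 := by
  intro h0
  have him : z.im + r = 0 := by simpa using congrArg im h0
  linarith [neg_abs_le z.im, abs_im_le_norm z]

end Complex

theorem sqrt_eq_norm_exp_mul_I_add_sqrt_two_mul_I (σ : ℝ) :
    √(3 + 2 * √2 * Real.sin σ) = ‖exp (σ * I) + √2 * I‖ := by
  rw [← Real.sqrt_sq (norm_nonneg _), norm_add_ofReal_mul_I_sq, norm_exp_ofReal_mul_I,
    exp_ofReal_mul_I_im, Real.sq_sqrt zero_le_two]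
  ring_nf

noncomputable section

def defectEigenvalue (z : ℂ) : ℂ := (z + √2 * I) / ‖z + √2 * I‖

def decayRate (z : ℂ) : ℂ := -I / ‖z + √2 * I‖

end

theorem sqrt_two_mul_sub_I_mul_conj {z : ℂ} (hz : ‖z‖ = 1) :
    √2 * (z + √2 * I) - I * z * conj (z + √2 * I) = I := by
  have hzz : z * conj z = 1 := by rw [mul_conj', hz]; simp
  have h2 : ((√2 : ℝ) : ℂ) ^ 2 = 2 := by exact_mod_cast Real.sq_sqrt zero_le_two
  simp only [map_add, map_mul, conj_ofReal, conj_I]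
  linear_combination I * h2 - I * hzz + √2 * z * I_sq

theorem I_mul_sub_sqrt_two_mul_defectEigenvalue_sq_div {z : ℂ} (hz : ‖z‖ = 1) (x : ℂ)
    (hx : x ≠ 0) :
    (I * z * x - √2 * defectEigenvalue z ^ 2 * x) / (defectEigenvalue z * x) = decayRate z := by
  have hw : z + √2 * I ≠ 0 := add_ofReal_mul_I_ne_zero (by rw [hz]; exact Real.one_lt_sqrt_two)
  have key := sqrt_two_mul_sub_I_mul_conj hz
  have hss := mul_conj' (z + √2 * I)
  simp only [defectEigenvalue, decayRate]
  generalize z + √2 * I = w at *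
  have hs : (‖w‖ : ℂ) ≠ 0 := ofReal_ne_zero.mpr (norm_ne_zero_iff.mpr hw)
  field_simp
  linear_combination (-w) * key - I * z * hss

theorem div_defectEigenvalue_mul_sqrt_two_mul_add (z x : ℂ) (hx : x ≠ 0) :
    x / (defectEigenvalue z * (√2 * x + I * conj z * x)) = decayRate z := by
  have hden : defectEigenvalue z * (√2 * x + I * conj z * x) = I * ‖z + √2 * I‖ * x := by
    rw [← div_norm_mul_conj (z + √2 * I), ← defectEigenvalue]
    simp only [map_add, map_mul, conj_ofReal, conj_I]
    linear_combination defectEigenvalue z * x * √2 * I_sq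
  rw [hden, div_mul_cancel_right₀ hx, decayRate, mul_inv, inv_I, neg_mul, neg_div, div_eq_mul_inv]

theorem exp_mul_I_relations (σp σm : ℝ) {z α β : ℂ} (hz : z = exp (((σp - σm) / 2 : ℝ) * I))
    (hβ : β = -I * exp (-((σp + σm) / 2 : ℝ) * I) * α) :
    exp (σp * I) * β = -I * z * α ∧ exp (-σp * I) * α = I * conj z * β ∧
      exp (σm * I) * β = -I * conj z * α ∧ exp (-σm * I) * α = I * z * β := by
  have hzc : conj z = exp (-((σp - σm) / 2 : ℝ) * I) := by
    rw [hz, ← Complex.exp_conj, map_mul, conj_ofReal, conj_I, mul_neg, neg_mul]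
  have exp_mul_I_mul : ∀ a b c : ℂ, a + b = c → exp (a * I) * exp (b * I) = exp (c * I) := by
    rintro a b c rfl
    rw [← Complex.exp_add, add_mul]
  have e1 := exp_mul_I_mul σp (-((σp + σm) / 2 : ℝ)) ((σp - σm) / 2 : ℝ) (by push_cast; ring)
  have e2 := exp_mul_I_mul (-((σp - σm) / 2 : ℝ)) (-((σp + σm) / 2 : ℝ)) (-σp) (by push_cast; ring)
  have e3 := exp_mul_I_mul σm (-((σp + σm) / 2 : ℝ)) (-((σp - σm) / 2 : ℝ)) (by push_cast; ring)
  have e4 := exp_mul_I_mul ((σp - σm) / 2 : ℝ) (-((σp + σm) / 2 : ℝ)) (-σm) (by push_cast; ring)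
  rw [← hz] at e1 e4
  rw [← hzc] at e2 e3
  set e := exp (-((σp + σm) / 2 : ℝ) * I)
  subst hβ
  refine ⟨?_, ?_, ?_, ?_⟩
  · linear_combination (-I * α) * e1
  · linear_combination (-α) * e2 + α * conj z * e * I_sq
  · linear_combination (-I * α) * e3
  · linear_combination (-α) * e4 + α * z * e * I_sq

theorem theta_s_consistency_general (σp σm : ℝ) (c : ℂ) (hc : c ≠ 0) :
    let σ := (σp - σm) / 2
    let α : ℂ := c / Real.sqrt 2
    let β : ℂ := -Complex.I * Complex.exp (-((σp + σm) / 2 : ℝ) * Complex.I) * c / Real.sqrt 2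
    let lam : ℂ := (Real.cos σ + (Real.sin σ + Real.sqrt 2) * Complex.I) /
      (Real.sqrt (3 + 2 * Real.sqrt 2 * Real.sin σ) : ℂ)
    let θs : ℂ := -Complex.I / (Real.sqrt (3 + 2 * Real.sqrt 2 * Real.sin σ) : ℂ)
    (-(Real.sqrt 2 * lam ^ 2 * α + Complex.exp (σp * Complex.I) * β) / (lam * α) = θs) ∧
    β / (lam * (Complex.exp (-σp * Complex.I) * α + Real.sqrt 2 * β)) = θs ∧
    α / (lam * (Real.sqrt 2 * α - Complex.exp (σm * Complex.I) * β)) = θs ∧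
    (Complex.exp (-σm * Complex.I) * α - Real.sqrt 2 * lam ^ 2 * β) / (lam * β) = θs := by
  intro σ α β lam θs
  set z := exp (σ * I) with hz_def
  have hz : ‖z‖ = 1 := norm_exp_ofReal_mul_I σ
  have hlam : lam = defectEigenvalue z := by
    rw [defectEigenvalue, ← sqrt_eq_norm_exp_mul_I_add_sqrt_two_mul_I, hz_def, exp_mul_I,
      ← ofReal_cos, ← ofReal_sin]
    ring
  have hθ : θs = decayRate z := by rw [decayRate, ← sqrt_eq_norm_exp_mul_I_add_sqrt_two_mul_I]
  have hα : α ≠ 0 := div_ne_zero hc (ofReal_ne_zero.mpr (Real.sqrt_pos.mpr two_pos).ne')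
  have hβα : β = -I * exp (-((σp + σm) / 2 : ℝ) * I) * α := mul_div_assoc _ _ _
  have hβ : β ≠ 0 := by rw [hβα]; exact mul_ne_zero (mul_ne_zero (by simp) (exp_ne_zero _)) hα
  obtain ⟨h₁, h₂, h₃, h₄⟩ := exp_mul_I_relations σp σm hz_def hβα
  rw [hlam, hθ]
  refine ⟨?_, ?_, ?_, ?_⟩
  · rw [h₁, ← I_mul_sub_sqrt_two_mul_defectEigenvalue_sq_div hz α hα]
    congr 1
    ring
  · rw [h₂, add_comm, div_defectEigenvalue_mul_sqrt_two_mul_add z β hβ]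
  · rw [h₃, ← div_defectEigenvalue_mul_sqrt_two_mul_add z α hα]
    congr 2
    ring
  · rw [h₄, I_mul_sub_sqrt_two_mul_defectEigenvalue_sq_div hz β hβ]

theorem theta_s_consistency (σp σm : ℝ) (c : ℂ) (hc : c ≠ 0)
    (hσ : Real.sin ((σp - σm) / 2) > -1 / Real.sqrt 2) :
    let σ := (σp - σm) / 2
    let α : ℂ := c / Real.sqrt 2
    let β : ℂ := -Complex.I * Complex.exp (-((σp + σm) / 2 : ℝ) * Complex.I) * c / Real.sqrt 2
    let lam : ℂ := (Real.cos σ + (Real.sin σ + Real.sqrt 2) * Complex.I) /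
      (Real.sqrt (3 + 2 * Real.sqrt 2 * Real.sin σ) : ℂ)
    let θs : ℂ := -Complex.I / (Real.sqrt (3 + 2 * Real.sqrt 2 * Real.sin σ) : ℂ)
    (-(Real.sqrt 2 * lam ^ 2 * α + Complex.exp (σp * Complex.I) * β) / (lam * α) = θs) ∧
    β / (lam * (Complex.exp (-σp * Complex.I) * α + Real.sqrt 2 * β)) = θs ∧
    α / (lam * (Real.sqrt 2 * α - Complex.exp (σm * Complex.I) * β)) = θs ∧
    (Complex.exp (-σm * Complex.I) * α - Real.sqrt 2 * lam ^ 2 * β) / (lam * β) = θs :=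
  theta_s_consistency_general σp σm c hc
end
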